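/- arXiv:1405.4527 — 4 statements merged into one kernel-verified Lean document; each statement's English description precedes it below -/
import Mathlib

section
/- Fix λ ∈ ℝ, λ > 0, and q ∈ (0,1) ⊂ ℝ. The map F(λ,q) from the semiring Sub_≥(ℕ × ℕ) of upper sets of ℕ × ℕ to the tropical reals ℝ_max⁺ := (ℝ≥0, max, ×), sending an upper set E to sup{q^(λa + b) : (a,b) ∈ E} (with F(λ,q)(∅) = 0), is a semiring homomorphism. -/
open Pointwise

/-- `F l q E = sup {q^(l·a + b) : (a,b) ∈ E}` (real powers), with `F l q ∅ = 0`. -/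
noncomputable def F (l q : ℝ) (E : Set (ℕ × ℕ)) : ℝ :=
  sSup ((fun p : ℕ × ℕ => q ^ (l * (p.1 : ℝ) + (p.2 : ℝ))) '' E)

/-- For λ > 0 and q ∈ (0,1), the map F(λ,q) from the semiring of upper sets of ℕ × ℕ
(union, Minkowski sum) to the tropical reals (ℝ≥0, max, ×) is a semiring homomorphism. -/
theorem stmt8 (l q : ℝ) (hl : 0 < l) (hq : q ∈ Set.Ioo (0 : ℝ) 1) :
    (∀ E : Set (ℕ × ℕ), 0 ≤ F l q E) ∧
    (∀ E E' : Set (ℕ × ℕ), IsUpperSet E → IsUpperSet E' →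
      F l q (E ∪ E') = max (F l q E) (F l q E') ∧
      F l q (E + E') = F l q E * F l q E') ∧
    F l q (∅ : Set (ℕ × ℕ)) = 0 ∧
    F l q (Set.univ : Set (ℕ × ℕ)) = 1 := by
  obtain ⟨hq0, hq1⟩ := hq
  set f : ℕ × ℕ → ℝ := fun p => q ^ (l * (p.1 : ℝ) + (p.2 : ℝ)) with hf
  have hexp : ∀ p : ℕ × ℕ, 0 ≤ l * (p.1 : ℝ) + (p.2 : ℝ) := fun p =>
    add_nonneg (mul_nonneg hl.le (Nat.cast_nonneg _)) (Nat.cast_nonneg _)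
  have hfpos : ∀ p, 0 < f p := fun p => Real.rpow_pos_of_pos hq0 _
  have hfle1 : ∀ p, f p ≤ 1 := fun p => Real.rpow_le_one hq0.le hq1.le (hexp p)
  have hbdd : ∀ E : Set (ℕ × ℕ), BddAbove (f '' E) := by
    intro E
    refine ⟨1, ?_⟩
    rintro x ⟨p, -, rfl⟩
    exact hfle1 p
  have hFeq : ∀ E, F l q E = sSup (f '' E) := fun E => rfl
  have hnonneg : ∀ E : Set (ℕ × ℕ), 0 ≤ F l q E := by
    intro E
    apply Real.sSup_nonneg
    rintro x ⟨p, -, rfl⟩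
    exact (hfpos p).le
  have hle : ∀ (E : Set (ℕ × ℕ)) (p : ℕ × ℕ), p ∈ E → f p ≤ F l q E := by
    intro E p hp
    exact le_csSup (hbdd E) ⟨p, hp, rfl⟩
  have hmulf : ∀ p p' : ℕ × ℕ, f (p + p') = f p * f p' := by
    intro p p'
    have h : l * (((p + p').1 : ℕ) : ℝ) + (((p + p').2 : ℕ) : ℝ)
        = (l * (p.1 : ℝ) + (p.2 : ℝ)) + (l * (p'.1 : ℝ) + (p'.2 : ℝ)) := by
      simp only [Prod.fst_add, Prod.snd_add]
      push_cast
      ring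
    simp only [hf]
    rw [h, Real.rpow_add hq0]
  refine ⟨hnonneg, ?_, ?_, ?_⟩
  · intro E E' _ _
    constructor
    · -- union
      rcases Set.eq_empty_or_nonempty E with rfl | hE
      · simp only [Set.empty_union, hFeq, Set.image_empty, Real.sSup_empty]
        exact (max_eq_right (hnonneg E')).symm
      rcases Set.eq_empty_or_nonempty E' with rfl | hE'
      · simp only [Set.union_empty, hFeq, Set.image_empty, Real.sSup_empty]
        exact (max_eq_left (hnonneg E)).symm
      simp only [hFeq, Set.image_union]
      exact csSup_union (hbdd E) (hE.image f) (hbdd E') (hE'.image f)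
    · -- product
      rcases Set.eq_empty_or_nonempty E with rfl | hE
      · simp [hFeq, Set.image_empty, Real.sSup_empty]
      rcases Set.eq_empty_or_nonempty E' with rfl | hE'
      · simp [hFeq, Set.image_empty, Real.sSup_empty]
      apply le_antisymm
      · apply Real.sSup_le _ (mul_nonneg (hnonneg E) (hnonneg E'))
        rintro x ⟨p, hp, rfl⟩
        rcases Set.mem_add.mp hp with ⟨a, ha, b, hb, rfl⟩
        show f (a + b) ≤ _
        rw [hmulf a b]
        exact mul_le_mul (hle E a ha) (hle E' b hb) (hfpos b).le (hnonneg E)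
      · -- sSup A * sSup B ≤ sSup (f '' (E + E'))
        have step1 : ∀ a ∈ f '' E, a * F l q E' ≤ F l q (E + E') := by
          rintro x ⟨p, hp, rfl⟩
          have : f p * F l q E' = sSup (f p • (f '' E')) := by
            rw [Real.sSup_smul_of_nonneg (hfpos p).le]
            rfl
          rw [this]
          apply Real.sSup_le _ (hnonneg _)
          rintro x hx
          rcases hx with ⟨y, ⟨p', hp', rfl⟩, rfl⟩
          show f p • f p' ≤ _
          have : f p • f p' = f (p + p') := by rw [hmulf]; rfl
          rw [this]
          exact hle _ _ (Set.add_mem_add hp hp')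
        have : F l q E * F l q E' = sSup ((F l q E') • (f '' E)) := by
          rw [Real.sSup_smul_of_nonneg (hnonneg E'), smul_eq_mul, mul_comm]
          rfl
        rw [this]
        apply Real.sSup_le _ (hnonneg _)
        rintro x ⟨a, ha, rfl⟩
        show F l q E' • a ≤ _
        rw [smul_eq_mul, mul_comm]
        exact step1 a ha
  · simp [hFeq, Set.image_empty, Real.sSup_empty]
  · apply le_antisymm
    · exact Real.sSup_le (by rintro x ⟨p, -, rfl⟩; exact hfle1 p) zero_le_one
    · have h1 : f (0, 0) = 1 := by simp [hf]
      calc (1 : ℝ) = f (0, 0) := h1.symm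
        _ ≤ F l q Set.univ := hle _ _ (Set.mem_univ _)
end

section
/- Let Conv_≥(ℕ × ℕ) be the set of closed convex subsets C of the quadrant Q = ℝ≥0 × ℝ≥0 such that C + Q = C and all extreme points of C lie in ℕ × ℕ. With addition C ⊕ C' := closed convex hull of C ∪ C' and multiplication C ⊙ C' := C + C' (Minkowski sum), Conv_≥(ℕ × ℕ) is a multiplicatively cancellative semiring: if A ⊙ B = A ⊙ C with A nonempty, then B = C. In particular, for nonempty closed convex upward-saturated sets in the quadrant, Minkowski addition is cancellative. -/
/-!
Cancel `A` by separation: if `b ∈ B \ C`, a continuous linear functional `f` with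
`f b < u < f` on `C` is bounded below on `C`, hence (as `C + Q = C`) nonnegative on `Q` and so
bounded below on `A ⊆ Q`. Choosing `a ∈ A` with `f a` within `u - f b` of `inf f(A)` and writing
`a + b = a' + c` with `a' ∈ A`, `c ∈ C` then gives `f a' < inf f(A)`, which is absurd.
-/

open Pointwise

/-- The positive quadrant in ℝ². -/
def Quad : Set (ℝ × ℝ) := {p : ℝ × ℝ | 0 ≤ p.1 ∧ 0 ≤ p.2}

/-- Membership in Conv_≥(ℕ × ℕ): ∅, or a closed convex subset C of the quadrant with
C + Q = C whose extreme points have natural-number coordinates. -/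
def IsConvGE (C : Set (ℝ × ℝ)) : Prop :=
  C = ∅ ∨ (C ⊆ Quad ∧ IsClosed C ∧ Convex ℝ C ∧ C + Quad = C ∧
    Set.extremePoints ℝ C ⊆ {p : ℝ × ℝ | ∃ a b : ℕ, p = ((a : ℝ), (b : ℝ))})

open Set

theorem le_of_add_subset_add {E F : Type*} [AddCommMonoid E] [FunLike F E ℝ]
    [AddMonoidHomClass F E ℝ] (f : F) {A B C : Set E} {u : ℝ} (hA : A.Nonempty)
    (hAf : BddBelow (f '' A)) (hCu : ∀ c ∈ C, u ≤ f c) (h : A + B ⊆ A + C) {b : E}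
    (hb : b ∈ B) : u ≤ f b := by
  by_contra! hbu
  obtain ⟨_, ⟨a, ha, rfl⟩, hfa⟩ :=
    Real.lt_sInf_add_pos (hA.image f) (sub_pos.2 hbu)
  obtain ⟨a', ha', c, hc, hsum⟩ := h (add_mem_add ha hb)
  have hfsum : f a' + f c = f a + f b := by
    rw [← map_add, ← map_add]; exact congrArg f hsum
  have ha'_ge : sInf (f '' A) ≤ f a' := csInf_le hAf ⟨a', ha', rfl⟩
  linarith [hCu c hc]

theorem nonneg_of_bddBelow_image_of_ray {E F : Type*} [AddCommGroup E] [Module ℝ E]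
    [FunLike F E ℝ] [LinearMapClass F ℝ E ℝ] (f : F) {S : Set E} {x q : E}
    (hray : ∀ t : ℝ, 0 ≤ t → x + t • q ∈ S) (hf : BddBelow (f '' S)) : 0 ≤ f q := by
  obtain ⟨m, hm⟩ := hf
  by_contra! hq
  have hm_ray (t : ℝ) (ht : 0 ≤ t) : m ≤ f x + t * f q := by
    simpa [map_add, map_smul] using hm ⟨_, hray t ht, rfl⟩
  have := hm_ray ((f x - m + 1) / -f q) (div_nonneg (by linarith [hm_ray 0 le_rfl]) (by linarith))
  rw [div_mul_eq_mul_div, div_neg, mul_div_assoc, div_self hq.ne] at this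
  linarith

theorem subset_of_add_subset_add {E : Type*} [TopologicalSpace E] [AddCommGroup E]
    [IsTopologicalAddGroup E] [Module ℝ E] [ContinuousSMul ℝ E] [LocallyConvexSpace ℝ E]
    {A B C : Set E} (hCc : IsClosed C) (hCv : Convex ℝ C) (hA : A.Nonempty)
    (hbdd : ∀ f : StrongDual ℝ E, BddBelow (f '' C) → BddBelow (f '' A)) (h : A + B ⊆ A + C) :
    B ⊆ C := by
  intro b hb
  by_contra hbC
  obtain ⟨f, u, hfb, hfC⟩ := geometric_hahn_banach_point_closed hCv hCc hbC
  have hfC' (c : E) (hc : c ∈ C) : u ≤ f c := (hfC c hc).le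
  have hAf : BddBelow (f '' A) := hbdd f ⟨u, by rintro _ ⟨c, hc, rfl⟩; exact hfC' c hc⟩
  linarith [le_of_add_subset_add f hA hAf hfC' h hb]

theorem smul_mem_quad {t : ℝ} (ht : 0 ≤ t) {q : ℝ × ℝ} (hq : q ∈ Quad) : t • q ∈ Quad :=
  ⟨mul_nonneg ht hq.1, mul_nonneg ht hq.2⟩

theorem bddBelow_image_of_subset_quad {F : Type*} [FunLike F (ℝ × ℝ) ℝ]
    [LinearMapClass F ℝ (ℝ × ℝ) ℝ] (f : F) {A C : Set (ℝ × ℝ)} (hC : C.Nonempty)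
    (hCQ : C + Quad ⊆ C) (hf : BddBelow (f '' C)) (hA : A ⊆ Quad) : BddBelow (f '' A) := by
  obtain ⟨x, hx⟩ := hC
  refine ⟨0, ?_⟩
  rintro _ ⟨a, ha, rfl⟩
  exact nonneg_of_bddBelow_image_of_ray f
    (fun t ht => hCQ (add_mem_add hx (smul_mem_quad ht (hA ha)))) hf

theorem IsConvGE.subset_of_add_subset_add {A B C : Set (ℝ × ℝ)} (hC : IsConvGE C)
    (hA : A.Nonempty) (hAQ : A ⊆ Quad) (h : A + B ⊆ A + C) : B ⊆ C := by
  rcases C.eq_empty_or_nonempty with rfl | hCne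
  · rw [add_empty, subset_empty_iff, add_eq_empty] at h
    exact (h.resolve_left hA.ne_empty).le
  obtain ⟨-, hCc, hCv, hCQ, -⟩ := hC.resolve_left hCne.ne_empty
  exact _root_.subset_of_add_subset_add hCc hCv hA
    (fun f hf => bddBelow_image_of_subset_quad f hCne hCQ.subset hf hAQ) h

/-- The semiring Conv_≥(ℕ × ℕ) (convex hull of union as addition, Minkowski sum as
multiplication) is multiplicatively cancellative: A ⊙ B = A ⊙ C with A ≠ ∅ forces B = C. -/
theorem stmt12 (A B C : Set (ℝ × ℝ)) (hA : IsConvGE A) (hB : IsConvGE B) (hC : IsConvGE C)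
    (hAne : A.Nonempty) (h : A + B = A + C) : B = C := by
  have hAQ : A ⊆ Quad := (hA.resolve_left hAne.ne_empty).1
  exact (hC.subset_of_add_subset_add hAne hAQ h.le).antisymm
    (hB.subset_of_add_subset_add hAne hAQ h.ge)
end

section
/- The convex hull map γ : Sub_≥(ℕ × ℕ) → Conv_≥(ℕ × ℕ), sending an upper set E ⊆ ℕ × ℕ to the closed convex hull of E + Q in ℝ², is a semiring homomorphism: γ(E ∪ E') = conv(γ(E) ∪ γ(E')) and γ(E + E') = γ(E) + γ(E') (Minkowski sum). -/
open Pointwise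

/-- The convex hull map: `gam E` is the closed convex hull of E + Q in ℝ². -/
noncomputable def gam (E : Set (ℕ × ℕ)) : Set (ℝ × ℝ) :=
  closure (convexHull ℝ ((fun p : ℕ × ℕ => ((p.1 : ℝ), (p.2 : ℝ))) '' E + Quad))

lemma quad_closed : IsClosed Quad :=
  (isClosed_Ici.preimage continuous_fst).inter (isClosed_Ici.preimage continuous_snd)

lemma quad_convex : Convex ℝ Quad := by
  intro x hx y hy a b ha hb hab
  obtain ⟨hx1, hx2⟩ := hx
  obtain ⟨hy1, hy2⟩ := hy
  constructor <;> simp only [Prod.fst_add, Prod.snd_add, Prod.smul_fst, Prod.smul_snd,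
    smul_eq_mul] <;> positivity

lemma quad_add_quad : Quad + Quad = Quad := by
  apply Set.Subset.antisymm
  · rintro z ⟨a, ha, b, hb, rfl⟩
    exact ⟨add_nonneg ha.1 hb.1, add_nonneg ha.2 hb.2⟩
  · intro z hz
    exact ⟨z, hz, 0, ⟨le_refl 0, le_refl 0⟩, (add_zero z)⟩

/-- Sum of two closed subsets of the quadrant is closed. -/
lemma isClosed_add_quad {S T : Set (ℝ × ℝ)} (hS : S ⊆ Quad) (hT : T ⊆ Quad)
    (hSc : IsClosed S) (hTc : IsClosed T) : IsClosed (S + T) := by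
  apply IsSeqClosed.isClosed
  intro x z hx hz
  choose s hs t ht hst using fun n => hx n
  -- the norms of x n are bounded
  obtain ⟨M, hM⟩ := ((hz.norm).bddAbove_range : BddAbove (Set.range fun n => ‖x n‖))
  have hsb : ∀ n, s n ∈ Metric.closedBall (0 : ℝ × ℝ) M := by
    intro n
    have hq := hS (hs n)
    have hq' := hT (ht n)
    have h1 : |(s n).1| ≤ |(x n).1| := by
      rw [abs_of_nonneg hq.1, abs_of_nonneg (by rw [← hst n]; exact add_nonneg hq.1 hq'.1)]
      rw [← hst n]; simpa using hq'.1
    have h2 : |(s n).2| ≤ |(x n).2| := by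
      rw [abs_of_nonneg hq.2, abs_of_nonneg (by rw [← hst n]; exact add_nonneg hq.2 hq'.2)]
      rw [← hst n]; simpa using hq'.2
    have : ‖s n‖ ≤ ‖x n‖ := by
      rw [Prod.norm_def, Prod.norm_def]
      exact max_le (le_trans h1 (le_max_left _ _)) (le_trans h2 (le_max_right _ _))
    simp only [Metric.mem_closedBall, dist_zero_right]
    exact this.trans (hM ⟨n, rfl⟩)
  obtain ⟨a, -, φ, hφ, ha⟩ := tendsto_subseq_of_bounded Metric.isBounded_closedBall hsb
  have haS : a ∈ S := hSc.mem_of_tendsto ha (Filter.Eventually.of_forall fun n => hs (φ n))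
  have htt : Filter.Tendsto (fun n => t (φ n)) Filter.atTop (nhds (z - a)) := by
    have : (fun n => t (φ n)) = (fun n => x (φ n) - s (φ n)) := by
      funext n; rw [← hst (φ n)]; ring_nf
    rw [this]
    exact ((hz.comp (hφ.tendsto_atTop)).sub ha)
  have hbT : z - a ∈ T := hTc.mem_of_tendsto htt (Filter.Eventually.of_forall fun n => ht (φ n))
  exact ⟨a, haS, z - a, hbT, by ring⟩

lemma closure_add_subset {S T : Set (ℝ × ℝ)} : closure S + closure T ⊆ closure (S + T) := by
  rintro z ⟨a, ha, b, hb, rfl⟩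
  exact map_mem_closure₂ continuous_add ha hb fun u hu v hv => Set.add_mem_add hu hv

lemma closure_convexHull_union (X Y : Set (ℝ × ℝ)) :
    closure (convexHull ℝ (X ∪ Y)) =
      closure (convexHull ℝ (closure (convexHull ℝ X) ∪ closure (convexHull ℝ Y))) := by
  apply Set.Subset.antisymm
  · apply closure_mono; apply convexHull_mono
    exact Set.union_subset_union ((subset_convexHull ℝ X).trans subset_closure)
      ((subset_convexHull ℝ Y).trans subset_closure)
  · apply closure_minimal _ isClosed_closure
    apply convexHull_min _ (convex_convexHull ℝ _).closure
    apply Set.union_subset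
    · exact closure_mono (convexHull_mono Set.subset_union_left)
    · exact closure_mono (convexHull_mono Set.subset_union_right)

/-- The convex hull map γ : Sub_≥(ℕ × ℕ) → Conv_≥(ℕ × ℕ) is a semiring homomorphism:
γ(E ∪ E') is the addition (closed convex hull of the union) of γ(E) and γ(E'), and
γ(E + E') is the Minkowski sum γ(E) + γ(E'). -/
theorem stmt13 (E E' : Set (ℕ × ℕ)) (hE : IsUpperSet E) (hE' : IsUpperSet E') :
    gam (E ∪ E') = closure (convexHull ℝ (gam E ∪ gam E')) ∧
    gam (E + E') = gam E + gam E' := by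
  set f : ℕ × ℕ → ℝ × ℝ := fun p => ((p.1 : ℝ), (p.2 : ℝ)) with hf
  have himg : ∀ G : Set (ℕ × ℕ), f '' G ⊆ Quad := by
    rintro G z ⟨p, hp, rfl⟩
    exact ⟨Nat.cast_nonneg _, Nat.cast_nonneg _⟩
  have hsub : ∀ G : Set (ℕ × ℕ), f '' G + Quad ⊆ Quad := by
    intro G
    calc f '' G + Quad ⊆ Quad + Quad := Set.add_subset_add_right (himg G)
    _ = Quad := quad_add_quad
  constructor
  · -- union part
    have h1 : f '' (E ∪ E') + Quad = (f '' E + Quad) ∪ (f '' E' + Quad) := by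
      rw [Set.image_union, Set.union_add]
    rw [gam, h1, closure_convexHull_union]
    rfl
  · -- sum part
    have himgadd : f '' (E + E') = f '' E + f '' E' := by
      ext z
      constructor
      · rintro ⟨p, ⟨a, ha, b, hb, rfl⟩, rfl⟩
        exact ⟨f a, ⟨a, ha, rfl⟩, f b, ⟨b, hb, rfl⟩, by simp [hf, Prod.ext_iff]⟩
      · rintro ⟨u, ⟨a, ha, rfl⟩, v, ⟨b, hb, rfl⟩, rfl⟩
        exact ⟨a + b, Set.add_mem_add ha hb, by simp [hf, Prod.ext_iff]⟩
    have hsum : f '' (E + E') + Quad = (f '' E + Quad) + (f '' E' + Quad) := by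
      rw [himgadd, ← quad_add_quad]
      rw [add_add_add_comm, quad_add_quad]
    have hch : ∀ G : Set (ℕ × ℕ), convexHull ℝ (f '' G + Quad) ⊆ Quad := fun G =>
      convexHull_min (hsub G) quad_convex
    have hcl : ∀ G : Set (ℕ × ℕ), gam G ⊆ Quad := fun G =>
      closure_minimal (hch G) quad_closed
    have hclosed : IsClosed (gam E + gam E') :=
      isClosed_add_quad (hcl E) (hcl E') isClosed_closure isClosed_closure
    rw [gam, hsum, convexHull_add]
    apply Set.Subset.antisymm
    · apply closure_minimal _ hclosed
      exact Set.add_subset_add (subset_closure) (subset_closure)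
    · exact closure_add_subset
end

section
/- The germ semiring ℕ̄_ε: fix q ∈ (0,1) and consider germs at ε = 0 of continuous functions from a neighborhood of 0 ∈ ℝ to ℝ_max⁺ = (ℝ≥0, max, ×) with pointwise operations. The sub-semiring generated by the constant germ q and the germ ε ↦ q^(1+ε) consists of germs of the form ε ↦ max_i q^(a_i + b_i(1+ε)) with a_i, b_i ∈ ℕ (together with 0 and 1), and up to canonical isomorphism it is independent of the choice of q ∈ (0,1). -/
/-!
The germs `ε ↦ max_i q ^ (a_i + b_i (1 + ε))` contain 0, 1 and both generators, are closed under
`⊔` (concatenate the exponent lists) and `*` (add the exponents pairwise), and are built from the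
generators by `⊔` and `*`; so they are exactly `ℕ̄_ε(q)`. Since `q ^ logb q q' = q'`, the power map
`t ↦ t ^ logb q q'`, which is monotone on `[0, ∞)` and fixes `0`, sends `q ^ (a + b (1 + ε))` to
`q' ^ (a + b (1 + ε))`; applied pointwise to germs it therefore carries `ℕ̄_ε(q)` onto `ℕ̄_ε(q')`
term by term, and `t ↦ t ^ logb q' q` undoes it.
-/

/-- The function ε ↦ max_i q^(a_i + b_i(1+ε)) associated to a finite list of pairs
(a_i, b_i) ∈ ℕ × ℕ (with the empty list giving 0). -/
noncomputable def elemF (q : ℝ) (L : List (ℕ × ℕ)) : ℝ → ℝ := fun ε =>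
  (L.map fun p : ℕ × ℕ => q ^ ((p.1 : ℝ) + (p.2 : ℝ) * (1 + ε))).foldr max 0

/-- The sub-semiring ℕ̄_ε(q) of the semiring of germs at 0 of functions ℝ → ℝ≥0
(pointwise max and product), generated by the constant germ q and the germ
ε ↦ q^(1+ε): the smallest subset containing 0, 1 and the two generators and closed
under ⊔ and ×. -/
def gen (q : ℝ) : Set (Filter.Germ (nhds (0 : ℝ)) ℝ) :=
  ⋂₀ {S : Set (Filter.Germ (nhds (0 : ℝ)) ℝ) |
      (0 : Filter.Germ (nhds (0 : ℝ)) ℝ) ∈ S ∧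
      (1 : Filter.Germ (nhds (0 : ℝ)) ℝ) ∈ S ∧
      ((fun _ : ℝ => q : ℝ → ℝ) : Filter.Germ (nhds (0 : ℝ)) ℝ) ∈ S ∧
      ((fun ε : ℝ => q ^ (1 + ε) : ℝ → ℝ) : Filter.Germ (nhds (0 : ℝ)) ℝ) ∈ S ∧
      ∀ x ∈ S, ∀ y ∈ S, x ⊔ y ∈ S ∧ x * y ∈ S}

open Real

local notation "𝓖" => Filter.Germ (nhds (0 : ℝ)) ℝ

noncomputable def qMonomial (q : ℝ) (p : ℕ × ℕ) : ℝ → ℝ := fun ε =>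
  q ^ ((p.1 : ℝ) + (p.2 : ℝ) * (1 + ε))

def minkowskiSum (L M : List (ℕ × ℕ)) : List (ℕ × ℕ) :=
  L.flatMap fun p => M.map (p + ·)

section Functions

variable {q : ℝ}

lemma qMonomial_nonneg (hq : 0 ≤ q) (p : ℕ × ℕ) (ε : ℝ) : 0 ≤ qMonomial q p ε :=
  rpow_nonneg hq _

lemma qMonomial_add (hq : 0 < q) (p r : ℕ × ℕ) :
    qMonomial q (p + r) = qMonomial q p * qMonomial q r := by
  funext ε
  simp only [qMonomial, Pi.mul_apply, ← rpow_add hq, Prod.fst_add, Prod.snd_add]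
  push_cast
  ring_nf

lemma qMonomial_zero : qMonomial q 0 = 1 := by
  funext ε
  simp [qMonomial]

lemma qMonomial_one_zero : qMonomial q (1, 0) = fun _ => q := by
  funext ε
  simp [qMonomial]

lemma qMonomial_zero_one : qMonomial q (0, 1) = fun ε => q ^ (1 + ε) := by
  funext ε
  simp [qMonomial]

lemma elemF_cons (p : ℕ × ℕ) (L : List (ℕ × ℕ)) :
    elemF q (p :: L) = qMonomial q p ⊔ elemF q L := rfl

lemma elemF_nonneg (L : List (ℕ × ℕ)) (ε : ℝ) : 0 ≤ elemF q L ε := by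
  induction L with
  | nil => exact le_rfl
  | cons p L ih => exact le_max_of_le_right ih

lemma elemF_singleton (hq : 0 ≤ q) (p : ℕ × ℕ) : elemF q [p] = qMonomial q p := by
  funext ε
  exact max_eq_left (qMonomial_nonneg hq p ε)

lemma elemF_append (L M : List (ℕ × ℕ)) :
    elemF q (L ++ M) = elemF q L ⊔ elemF q M := by
  induction L with
  | nil => funext ε; exact (max_eq_right (elemF_nonneg M ε)).symm
  | cons p L ih => rw [List.cons_append, elemF_cons, elemF_cons, ih, sup_assoc]

lemma elemF_map_add (hq : 0 < q) (p : ℕ × ℕ) (M : List (ℕ × ℕ)) :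
    elemF q (M.map (p + ·)) = qMonomial q p * elemF q M := by
  induction M with
  | nil => exact (mul_zero _).symm
  | cons r M ih =>
    funext ε
    rw [List.map_cons, elemF_cons, elemF_cons, ih, qMonomial_add hq]
    exact (mul_max_of_nonneg _ _ (qMonomial_nonneg hq.le p ε)).symm

lemma elemF_minkowskiSum (hq : 0 < q) (L M : List (ℕ × ℕ)) :
    elemF q (minkowskiSum L M) = elemF q L * elemF q M := by
  induction L with
  | nil => exact (zero_mul _).symm
  | cons p L ih =>
    funext ε
    rw [minkowskiSum, List.flatMap_cons, elemF_append, elemF_map_add hq, ← minkowskiSum, ih,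
      elemF_cons]
    exact (max_mul_of_nonneg _ _ (elemF_nonneg M ε)).symm

end Functions

section Generation

variable {q : ℝ}

lemma gen_subset_of_closed {S : Set 𝓖} (h0 : (0 : 𝓖) ∈ S) (h1 : (1 : 𝓖) ∈ S)
    (hc : ((fun _ => q : ℝ → ℝ) : 𝓖) ∈ S) (hg : ((fun ε => q ^ (1 + ε) : ℝ → ℝ) : 𝓖) ∈ S)
    (hcl : ∀ x ∈ S, ∀ y ∈ S, x ⊔ y ∈ S ∧ x * y ∈ S) : gen q ⊆ S :=
  Set.sInter_subset_of_mem ⟨h0, h1, hc, hg, hcl⟩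

lemma zero_mem_gen : (0 : 𝓖) ∈ gen q := Set.mem_sInter.2 fun _ hS => hS.1

lemma one_mem_gen : (1 : 𝓖) ∈ gen q := Set.mem_sInter.2 fun _ hS => hS.2.1

lemma const_mem_gen : ((fun _ => q : ℝ → ℝ) : 𝓖) ∈ gen q :=
  Set.mem_sInter.2 fun _ hS => hS.2.2.1

lemma rpow_one_add_mem_gen : ((fun ε => q ^ (1 + ε) : ℝ → ℝ) : 𝓖) ∈ gen q :=
  Set.mem_sInter.2 fun _ hS => hS.2.2.2.1

lemma sup_mem_gen {x y : 𝓖} (hx : x ∈ gen q) (hy : y ∈ gen q) : x ⊔ y ∈ gen q :=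
  Set.mem_sInter.2 fun S hS => (hS.2.2.2.2 x (hx S hS) y (hy S hS)).1

lemma mul_mem_gen {x y : 𝓖} (hx : x ∈ gen q) (hy : y ∈ gen q) : x * y ∈ gen q :=
  Set.mem_sInter.2 fun S hS => (hS.2.2.2.2 x (hx S hS) y (hy S hS)).2

lemma qMonomial_mem_gen (hq : 0 < q) : ∀ p : ℕ × ℕ, (qMonomial q p : 𝓖) ∈ gen q
  | (0, 0) => by
    rw [show ((0, 0) : ℕ × ℕ) = 0 from rfl, qMonomial_zero]
    exact one_mem_gen
  | (0, b + 1) => by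
    rw [show ((0, b + 1) : ℕ × ℕ) = (0, b) + (0, 1) from rfl, qMonomial_add hq,
      Filter.Germ.coe_mul, qMonomial_zero_one]
    exact mul_mem_gen (qMonomial_mem_gen hq (0, b)) rpow_one_add_mem_gen
  | (a + 1, b) => by
    rw [show ((a + 1, b) : ℕ × ℕ) = (a, b) + (1, 0) from rfl, qMonomial_add hq,
      Filter.Germ.coe_mul, qMonomial_one_zero]
    exact mul_mem_gen (qMonomial_mem_gen hq (a, b)) const_mem_gen

lemma elemF_mem_gen (hq : 0 < q) (L : List (ℕ × ℕ)) : (elemF q L : 𝓖) ∈ gen q := by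
  induction L with
  | nil => exact zero_mem_gen
  | cons p L ih => exact sup_mem_gen (qMonomial_mem_gen hq p) ih

lemma coe_elemF_append (L M : List (ℕ × ℕ)) :
    ((elemF q (L ++ M) : ℝ → ℝ) : 𝓖) = (elemF q L : 𝓖) ⊔ (elemF q M : 𝓖) := by
  rw [elemF_append]
  rfl

lemma coe_elemF_minkowskiSum (hq : 0 < q) (L M : List (ℕ × ℕ)) :
    ((elemF q (minkowskiSum L M) : ℝ → ℝ) : 𝓖) = (elemF q L : 𝓖) * (elemF q M : 𝓖) := by
  rw [elemF_minkowskiSum hq, Filter.Germ.coe_mul]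

lemma coe_elemF_singleton_zero (hq : 0 ≤ q) : ((elemF q [0] : ℝ → ℝ) : 𝓖) = 1 := by
  rw [elemF_singleton hq, qMonomial_zero, Filter.Germ.coe_one]

theorem gen_eq_range (hq : 0 < q) : gen q = Set.range fun L => (elemF q L : 𝓖) := by
  refine (gen_subset_of_closed (S := Set.range fun L => (elemF q L : 𝓖))
    ⟨[], rfl⟩ ⟨[0], coe_elemF_singleton_zero hq.le⟩ ⟨[(1, 0)], ?_⟩ ⟨[(0, 1)], ?_⟩ ?_).antisymm ?_
  · dsimp only; rw [elemF_singleton hq.le, qMonomial_one_zero]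
  · dsimp only; rw [elemF_singleton hq.le, qMonomial_zero_one]
  · rintro _ ⟨L, rfl⟩ _ ⟨M, rfl⟩
    exact ⟨⟨L ++ M, coe_elemF_append L M⟩, ⟨minkowskiSum L M, coe_elemF_minkowskiSum hq L M⟩⟩
  · rintro _ ⟨L, rfl⟩
    exact elemF_mem_gen hq L

end Generation

section Rebase

variable {q q' : ℝ}

noncomputable def rebase (q q' : ℝ) : 𝓖 → 𝓖 :=
  Filter.Germ.map fun t => t ^ logb q q'

lemma rpow_rpow_logb (hq : 0 < q) (hq₁ : q ≠ 1) (hq' : 0 < q') (e : ℝ) :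
    (q ^ e) ^ logb q q' = q' ^ e := by
  rw [← rpow_mul hq.le, mul_comm, rpow_mul hq.le, rpow_logb hq hq₁ hq']

lemma elemF_rpow_logb (hq : q ∈ Set.Ioo 0 1) (hq' : q' ∈ Set.Ioo 0 1) (L : List (ℕ × ℕ))
    (ε : ℝ) : elemF q L ε ^ logb q q' = elemF q' L ε := by
  have hlogb : 0 < logb q q' := logb_pos_of_base_lt_one hq.1 hq.2 hq'.1 hq'.2
  induction L with
  | nil => exact zero_rpow hlogb.ne'
  | cons p L ih =>
    rw [elemF_cons, elemF_cons, Pi.sup_apply, Pi.sup_apply,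
      (monotoneOn_rpow_Ici_of_exponent_nonneg hlogb.le).map_max
        (qMonomial_nonneg hq.1.le p ε) (elemF_nonneg L ε),
      ih, qMonomial, qMonomial, rpow_rpow_logb hq.1 hq.2.ne hq'.1]

lemma rebase_elemF (hq : q ∈ Set.Ioo 0 1) (hq' : q' ∈ Set.Ioo 0 1) (L : List (ℕ × ℕ)) :
    rebase q q' (elemF q L : 𝓖) = (elemF q' L : 𝓖) :=
  congrArg _ (funext (elemF_rpow_logb hq hq' L))

theorem bijOn_rebase (hq : q ∈ Set.Ioo 0 1) (hq' : q' ∈ Set.Ioo 0 1) :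
    Set.BijOn (rebase q q') (gen q) (gen q') := by
  rw [gen_eq_range hq.1, gen_eq_range hq'.1]
  refine ⟨?_, ?_, ?_⟩
  · rintro _ ⟨L, rfl⟩
    exact ⟨L, (rebase_elemF hq hq' L).symm⟩
  · rintro _ ⟨L, rfl⟩ _ ⟨M, rfl⟩ h
    rw [rebase_elemF hq hq', rebase_elemF hq hq'] at h
    simpa only [rebase_elemF hq' hq] using congrArg (rebase q' q) h
  · rintro _ ⟨L, rfl⟩
    exact ⟨_, ⟨L, rfl⟩, rebase_elemF hq hq' L⟩

lemma rebase_sup (hq : q ∈ Set.Ioo 0 1) (hq' : q' ∈ Set.Ioo 0 1) {x y : 𝓖}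
    (hx : x ∈ gen q) (hy : y ∈ gen q) : rebase q q' (x ⊔ y) = rebase q q' x ⊔ rebase q q' y := by
  rw [gen_eq_range hq.1] at hx hy
  obtain ⟨L, rfl⟩ := hx
  obtain ⟨M, rfl⟩ := hy
  simp only [← coe_elemF_append, rebase_elemF hq hq']

lemma rebase_mul (hq : q ∈ Set.Ioo 0 1) (hq' : q' ∈ Set.Ioo 0 1) {x y : 𝓖}
    (hx : x ∈ gen q) (hy : y ∈ gen q) : rebase q q' (x * y) = rebase q q' x * rebase q q' y := by
  rw [gen_eq_range hq.1] at hx hy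
  obtain ⟨L, rfl⟩ := hx
  obtain ⟨M, rfl⟩ := hy
  simp only [← coe_elemF_minkowskiSum hq.1, ← coe_elemF_minkowskiSum hq'.1, rebase_elemF hq hq']

end Rebase

/-- The germ semiring ℕ̄_ε: its elements are exactly the germs ε ↦ max_i q^(a_i+b_i(1+ε))
(together with 0 and 1), and up to canonical isomorphism (sending generators to
generators and preserving the operations) it does not depend on the choice of q ∈ (0,1). -/
theorem stmt17 (q q' : ℝ) (hq : q ∈ Set.Ioo (0 : ℝ) 1) (hq' : q' ∈ Set.Ioo (0 : ℝ) 1) :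
    gen q = {x : Filter.Germ (nhds (0 : ℝ)) ℝ | x = 0 ∨ x = 1 ∨
        ∃ L : List (ℕ × ℕ), L ≠ [] ∧ x = ((elemF q L : ℝ → ℝ) : Filter.Germ (nhds (0 : ℝ)) ℝ)} ∧
    ∃ Φ : Filter.Germ (nhds (0 : ℝ)) ℝ → Filter.Germ (nhds (0 : ℝ)) ℝ,
      Set.BijOn Φ (gen q) (gen q') ∧
      Φ ((fun _ : ℝ => q : ℝ → ℝ) : Filter.Germ (nhds (0 : ℝ)) ℝ)
        = ((fun _ : ℝ => q' : ℝ → ℝ) : Filter.Germ (nhds (0 : ℝ)) ℝ) ∧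
      Φ ((fun ε : ℝ => q ^ (1 + ε) : ℝ → ℝ) : Filter.Germ (nhds (0 : ℝ)) ℝ)
        = ((fun ε : ℝ => q' ^ (1 + ε) : ℝ → ℝ) : Filter.Germ (nhds (0 : ℝ)) ℝ) ∧
      Φ 0 = 0 ∧ Φ 1 = 1 ∧
      ∀ x ∈ gen q, ∀ y ∈ gen q, Φ (x ⊔ y) = Φ x ⊔ Φ y ∧ Φ (x * y) = Φ x * Φ y := by
  refine ⟨?_, rebase q q', bijOn_rebase hq hq', ?_, ?_, rebase_elemF hq hq' [], ?_,
    fun x hx y hy => ⟨rebase_sup hq hq' hx hy, rebase_mul hq hq' hx hy⟩⟩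
  · rw [gen_eq_range hq.1]
    ext x
    constructor
    · rintro ⟨_ | ⟨p, L⟩, rfl⟩
      · exact Or.inl rfl
      · exact Or.inr (Or.inr ⟨_, List.cons_ne_nil p L, rfl⟩)
    · rintro (rfl | rfl | ⟨L, -, rfl⟩)
      exacts [⟨[], rfl⟩, ⟨[0], coe_elemF_singleton_zero hq.1.le⟩, ⟨L, rfl⟩]
  · exact congrArg _ (funext fun _ => rpow_logb hq.1 hq.2.ne hq'.1)
  · exact congrArg _ (funext fun ε => rpow_rpow_logb hq.1 hq.2.ne hq'.1 (1 + ε))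
  · simpa only [coe_elemF_singleton_zero hq.1.le, coe_elemF_singleton_zero hq'.1.le] using
      rebase_elemF hq hq' [0]
end
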